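/- arXiv:2108.06467 — 3 statements merged into one kernel-verified Lean document; each statement's English description precedes it below -/
import Mathlib

section
/- Let ρ : ℝ → ℝ be strongly sigmoidal of order k with constants a, b, C > 0. Let ε ∈ (0,1), set δ = (ε/(2^{k+1}C))^{1/k} and B = max{1, (C/ε)^{1/a}}. Then the function P(x) = (δ/B)^k ρ(Bx/δ) satisfies |x_+^k − P(x)| ≤ ε for all x with |x| ≤ 1. -/
open MeasureTheory Filter
open scoped Classical ENNReal NNReal
/-- A continuous `ρ : ℝ → ℝ` is sigmoidal of order `k ≥ 1` (with constant `C`) if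
`ρ(x)/x^k → 0` as `x → -∞`, `ρ(x)/x^k → 1` as `x → +∞`, and `|ρ(x)| ≤ C(1+|x|)^k`. -/
def SigmoidalOfOrder (ρ : ℝ → ℝ) (k : ℕ) (C : ℝ) : Prop :=
  Continuous ρ ∧
    Filter.Tendsto (fun x : ℝ => ρ x / x ^ k) Filter.atBot (nhds 0) ∧
    Filter.Tendsto (fun x : ℝ => ρ x / x ^ k) Filter.atTop (nhds 1) ∧
    ∀ x : ℝ, |ρ x| ≤ C * (1 + |x|) ^ k

/-- `ρ` is strongly sigmoidal of order `k` with constants `a, b, C > 0`. -/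
def StronglySigmoidal (ρ : ℝ → ℝ) (k : ℕ) (a b C : ℝ) : Prop :=
  SigmoidalOfOrder ρ k C ∧ Differentiable ℝ ρ ∧
    (∀ x : ℝ, x < 0 → |ρ x / x ^ k| ≤ C * |x| ^ (-a)) ∧
    (∀ x : ℝ, 0 < x → |ρ x / x ^ k - 1| ≤ C * x ^ (-a)) ∧
    ∀ x : ℝ, |deriv ρ x| ≤ C * |x| ^ b

/-!
Write the approximant as `r ^ k * ρ (x / r)` with `r = δ / B`, and `y = x / r`.
Where `|x| ≥ δ`, i.e. `|y| ≥ B`, it equals `x ^ k * (ρ y / y ^ k)`, and the tail bounds of a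
strongly sigmoidal `ρ` put `ρ y / y ^ k` within `C * B ^ (-a) ≤ ε` of `0` (for `y < 0`) or of `1`
(for `y > 0`); since `|x| ≤ 1` this gives the bound. Where `|x| ≤ δ`, both terms are small:
`|r ^ k * ρ y| ≤ C (2 δ) ^ k = ε / 2` by the growth bound, and `x₊ ^ k ≤ δ ^ k ≤ ε / 2` because
`C ≥ 1`, which follows from comparing `ρ x / x ^ k → 1` with
`|ρ x| / x ^ k ≤ C ((1 + x) / x) ^ k → C`.
-/

open Topology

theorem pow_mul_apply_div_eq (ρ : ℝ → ℝ) (k : ℕ) {r x : ℝ} (hr : r ≠ 0) (hx : x ≠ 0) :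
    r ^ k * ρ (x / r) = x ^ k * (ρ (x / r) / (x / r) ^ k) := by
  rw [div_pow]
  field_simp

namespace SigmoidalOfOrder

variable {ρ : ℝ → ℝ} {k : ℕ} {C : ℝ}

theorem one_le_const (hρ : SigmoidalOfOrder ρ k C) : 1 ≤ C := by
  obtain ⟨-, -, hlim, hgrow⟩ := hρ
  have hratio : Tendsto (fun x : ℝ => (1 + x) / x) atTop (𝓝 1) := by
    have h := tendsto_inv_atTop_zero.add_const (1 : ℝ)
    rw [zero_add] at h
    refine h.congr' ?_
    filter_upwards [eventually_ne_atTop 0] with x hx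
    field_simp
  have hbound : Tendsto (fun x : ℝ => C * ((1 + x) / x) ^ k) atTop (𝓝 C) := by
    simpa using (hratio.pow k).const_mul C
  refine le_of_tendsto_of_tendsto hlim hbound ?_
  filter_upwards [eventually_gt_atTop 0] with x hx
  calc ρ x / x ^ k ≤ |ρ x| / x ^ k := by gcongr; exact le_abs_self _
    _ ≤ C * (1 + |x|) ^ k / x ^ k := by gcongr; exact hgrow x
    _ = C * ((1 + x) / x) ^ k := by rw [abs_of_pos hx, div_pow, mul_div_assoc]

theorem const_nonneg (hρ : SigmoidalOfOrder ρ k C) : 0 ≤ C :=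
  zero_le_one.trans hρ.one_le_const

theorem abs_pow_mul_apply_div_le (hρ : SigmoidalOfOrder ρ k C) {r B x : ℝ} (hr : 0 < r)
    (hB : 1 ≤ B) (hx : |x| ≤ r * B) : |r ^ k * ρ (x / r)| ≤ C * (2 * (r * B)) ^ k := by
  have hy : 1 + |x / r| ≤ 2 * B := by
    have : |x| / r ≤ B := by rw [div_le_iff₀ hr]; linarith
    rw [abs_div, abs_of_pos hr]
    linarith
  calc |r ^ k * ρ (x / r)| = r ^ k * |ρ (x / r)| := by rw [abs_mul, abs_of_pos (by positivity)]
    _ ≤ r ^ k * (C * (2 * B) ^ k) := by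
        gcongr
        exact (hρ.2.2.2 _).trans (by gcongr; exact hρ.const_nonneg)
    _ = C * (2 * (r * B)) ^ k := by ring

end SigmoidalOfOrder

namespace StronglySigmoidal

variable {ρ : ℝ → ℝ} {k : ℕ} {a b C : ℝ}

theorem abs_pow_mul_apply_div_le_of_le_neg (hρ : StronglySigmoidal ρ k a b C) (ha : 0 ≤ a)
    {r B x : ℝ} (hr : 0 < r) (hB : 0 < B) (hx : x ≤ -(r * B)) :
    |r ^ k * ρ (x / r)| ≤ C * B ^ (-a) * |x| ^ k := by
  have hy : x / r < 0 := div_neg_of_neg_of_pos (by nlinarith) hr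
  have hBy : B ≤ |x / r| := by
    rw [abs_of_neg hy, le_neg, div_le_iff₀ hr]
    linarith
  rw [pow_mul_apply_div_eq ρ k hr.ne' (by nlinarith), abs_mul, abs_pow, mul_comm]
  gcongr
  calc |ρ (x / r) / (x / r) ^ k| ≤ C * |x / r| ^ (-a) := hρ.2.2.1 _ hy
    _ ≤ C * B ^ (-a) := by
        gcongr ?_ * ?_
        · exact hρ.1.const_nonneg
        · exact Real.rpow_le_rpow_of_nonpos hB hBy (neg_nonpos.2 ha)

theorem abs_pow_sub_pow_mul_apply_div_le (hρ : StronglySigmoidal ρ k a b C) (ha : 0 ≤ a)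
    {r B x : ℝ} (hr : 0 < r) (hB : 0 < B) (hx : r * B ≤ x) :
    |x ^ k - r ^ k * ρ (x / r)| ≤ C * B ^ (-a) * x ^ k := by
  have hx0 : 0 < x := by nlinarith
  have hBy : B ≤ x / r := by rwa [le_div_iff₀ hr, mul_comm]
  rw [pow_mul_apply_div_eq ρ k hr.ne' hx0.ne', ← mul_one_sub, abs_mul, abs_sub_comm,
    abs_of_pos (pow_pos hx0 k), mul_comm]
  gcongr
  calc |ρ (x / r) / (x / r) ^ k - 1| ≤ C * (x / r) ^ (-a) := hρ.2.2.2.1 _ (by positivity)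
    _ ≤ C * B ^ (-a) := by
        gcongr ?_ * ?_
        · exact hρ.1.const_nonneg
        · exact Real.rpow_le_rpow_of_nonpos hB hBy (neg_nonpos.2 ha)

theorem abs_max_pow_sub_pow_mul_apply_div_le (hρ : StronglySigmoidal ρ k a b C) (hk : k ≠ 0)
    (ha : 0 ≤ a) {r B x : ℝ} (hr : 0 < r) (hB : 1 ≤ B) (hx : |x| ≤ 1) :
    |max x 0 ^ k - r ^ k * ρ (x / r)| ≤
      max (C * B ^ (-a)) ((r * B) ^ k + C * (2 * (r * B)) ^ k) := by
  have hB0 : 0 < B := by linarith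
  have hCB : 0 ≤ C * B ^ (-a) := mul_nonneg hρ.1.const_nonneg (by positivity)
  rcases le_or_gt |x| (r * B) with hmid | hout
  · refine le_max_of_le_right ?_
    calc |max x 0 ^ k - r ^ k * ρ (x / r)| ≤ |max x 0 ^ k| + |r ^ k * ρ (x / r)| := abs_sub _ _
      _ ≤ (r * B) ^ k + C * (2 * (r * B)) ^ k := by
          gcongr
          · rw [abs_pow, abs_of_nonneg (le_max_right _ _)]
            gcongr
            exact max_le ((le_abs_self x).trans hmid) (by positivity)
          · exact hρ.1.abs_pow_mul_apply_div_le hr hB hmid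
  refine le_max_of_le_left ?_
  have hrB : 0 < r * B := mul_pos hr hB0
  rcases lt_abs.1 hout with hpos | hneg
  · have hx0 : 0 ≤ x := by linarith
    rw [max_eq_left hx0]
    refine (hρ.abs_pow_sub_pow_mul_apply_div_le ha hr hB0 hpos.le).trans ?_
    exact mul_le_of_le_one_right hCB (pow_le_one₀ hx0 ((le_abs_self x).trans hx))
  · rw [max_eq_right (by linarith), zero_pow hk, zero_sub, abs_neg]
    refine (hρ.abs_pow_mul_apply_div_le_of_le_neg ha hr hB0 (by linarith)).trans ?_
    exact mul_le_of_le_one_right hCB (pow_le_one₀ (abs_nonneg x) hx)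

end StronglySigmoidal

theorem mul_rpow_neg_le_of_rpow_one_div_le {a c ε B : ℝ} (ha : 0 < a) (hc : 0 ≤ c) (hε : 0 < ε)
    (hB0 : 0 < B) (hB : (c / ε) ^ (1 / a) ≤ B) : c * B ^ (-a) ≤ ε := by
  have hBa : c / ε ≤ B ^ a := by
    calc c / ε = ((c / ε) ^ (1 / a)) ^ a := by
          rw [← Real.rpow_mul (by positivity), one_div_mul_cancel ha.ne', Real.rpow_one]
      _ ≤ B ^ a := by gcongr
  rw [Real.rpow_neg hB0.le, ← div_eq_mul_inv, div_le_iff₀ (Real.rpow_pos_of_pos hB0 a)]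
  rw [div_le_iff₀ hε] at hBa
  linarith

theorem basic_sigmoidal_approximant_general
    (ρ : ℝ → ℝ) (k : ℕ) (a b C : ℝ) (hk : 1 ≤ k)
    (ha : 0 < a)
    (hρ : StronglySigmoidal ρ k a b C)
    (ε : ℝ) (hε0 : 0 < ε) :
    ∀ x : ℝ, |x| ≤ 1 →
      |max x 0 ^ k -
        ((ε / (2 ^ (k + 1) * C)) ^ ((1 : ℝ) / k) / max 1 ((C / ε) ^ (1 / a))) ^ k *
          ρ (max 1 ((C / ε) ^ (1 / a)) * x / (ε / (2 ^ (k + 1) * C)) ^ ((1 : ℝ) / k))| ≤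
        ε := by
  intro x hx
  have hC1 : 1 ≤ C := hρ.1.one_le_const
  have hC : 0 < C := by linarith
  set δ := (ε / (2 ^ (k + 1) * C)) ^ ((1 : ℝ) / k)
  set B := max 1 ((C / ε) ^ (1 / a))
  have hB : 1 ≤ B := le_max_left _ _
  have hδ : 0 < δ := by positivity
  have hδk : δ ^ k = ε / (2 ^ (k + 1) * C) := by
    simp only [δ, one_div]
    exact Real.rpow_inv_natCast_pow (by positivity) (by omega)
  have hδB : δ / B * B = δ := div_mul_cancel₀ _ (by positivity)
  rw [mul_comm B x, ← div_div_eq_mul_div]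
  refine (hρ.abs_max_pow_sub_pow_mul_apply_div_le (by omega) ha.le (by positivity) hB hx).trans ?_
  rw [hδB]
  refine max_le (mul_rpow_neg_le_of_rpow_one_div_le ha (by linarith) hε0 (by positivity)
    (le_max_right _ _)) ?_
  have h2C : 2 ≤ 2 ^ (k + 1) * C := by
    calc (2 : ℝ) = 2 ^ 1 * 1 := by norm_num
      _ ≤ 2 ^ (k + 1) * C := by gcongr <;> norm_num
  calc δ ^ k + C * (2 * δ) ^ k = ε / (2 ^ (k + 1) * C) + ε / 2 := by
        rw [mul_pow, hδk, pow_succ]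
        field_simp
    _ ≤ ε / 2 + ε / 2 := by gcongr
    _ = ε := add_halves ε

/-- The basic approximant of `x_+^k`: for strongly sigmoidal `ρ` of order
`k` with constants `a, b, C`, setting `δ = (ε/(2^{k+1}C))^{1/k}` and `B = max{1,(C/ε)^{1/a}}`,
the function `P(x) = (δ/B)^k ρ(Bx/δ)` satisfies `|x_+^k - P(x)| ≤ ε` for `|x| ≤ 1`. -/
theorem basic_sigmoidal_approximant
    (ρ : ℝ → ℝ) (k : ℕ) (a b C : ℝ) (hk : 1 ≤ k)
    (ha : 0 < a) (hb : 0 < b) (hC : 0 < C)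
    (hρ : StronglySigmoidal ρ k a b C)
    (ε : ℝ) (hε0 : 0 < ε) (hε1 : ε < 1) :
    ∀ x : ℝ, |x| ≤ 1 →
      |max x 0 ^ k -
        ((ε / (2 ^ (k + 1) * C)) ^ ((1 : ℝ) / k) / max 1 ((C / ε) ^ (1 / a))) ^ k *
          ρ (max 1 ((C / ε) ^ (1 / a)) * x / (ε / (2 ^ (k + 1) * C)) ^ ((1 : ℝ) / k))| ≤
        ε :=
  basic_sigmoidal_approximant_general ρ k a b C hk ha hρ ε hε0
end

section
/- Let L ∈ ℕ, D > 0, and let ρ : ℝ → ℝ be strongly sigmoidal of order k with constants a, b, C > 0. Then there exist A > 0 and a positive integer n depending only on L, k, a, b, D such that for every ε ∈ (0,1) there is a neural network Φ ∈ NN_{L+1,2L+2,1,ρ} satisfying |x^{k^L} − Φ(x)| ≤ ε for all |x| ≤ D, with all weights of Φ bounded in absolute value by A·ε^{−n}. -/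
open MeasureTheory Filter
open scoped Classical ENNReal NNReal

/-- A feed-forward neural network with input dimension `d` and exactly `L` layers
(affine maps `W_1, …, W_L`), output dimension `1`. -/
structure NeuralNet (d L : ℕ) where
  width : ℕ → ℕ
  width_zero : width 0 = d
  width_last : width L = 1
  A : (ℓ : ℕ) → Matrix (Fin (width (ℓ + 1))) (Fin (width ℓ)) ℝ
  b : (ℓ : ℕ) → Fin (width (ℓ + 1)) → ℝ

namespace NeuralNet

variable {d L : ℕ}

/-- The activated value of the `ℓ`-th layer on input `x`. -/
noncomputable def hidden (Φ : NeuralNet d L) (ρ : ℝ → ℝ) (x : Fin d → ℝ) :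
    (ℓ : ℕ) → Fin (Φ.width ℓ) → ℝ
  | 0 => fun i => x (Fin.cast Φ.width_zero i)
  | ℓ + 1 => fun i => ρ ((∑ j, Φ.A ℓ i j * Φ.hidden ρ x ℓ j) + Φ.b ℓ i)

/-- The realization `Φ(x) = W_L (ρ (W_{L-1} (ρ (⋯ ρ(W_1 x)))))` of the network:
the final affine map is applied without activation. -/
noncomputable def realize (Φ : NeuralNet d L) (ρ : ℝ → ℝ) (x : Fin d → ℝ) : ℝ :=
  ∑ i : Fin (Φ.width (L - 1 + 1)),
    ((∑ j, Φ.A (L - 1) i j * Φ.hidden ρ x (L - 1) j) + Φ.b (L - 1) i)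

/-- Connectivity: total number of nonzero entries of all matrices `A_ℓ` and vectors `b_ℓ`. -/
noncomputable def conn (Φ : NeuralNet d L) : ℕ :=
  ∑ ℓ ∈ Finset.range L,
    ((Finset.univ.filter fun p : Fin (Φ.width (ℓ + 1)) × Fin (Φ.width ℓ) =>
        Φ.A ℓ p.1 p.2 ≠ 0).card +
      (Finset.univ.filter fun i : Fin (Φ.width (ℓ + 1)) => Φ.b ℓ i ≠ 0).card)

/-- All weights of the network are bounded in absolute value by `B`. -/
def weightsBdd (Φ : NeuralNet d L) (B : ℝ) : Prop :=
  ∀ ℓ < L, (∀ i j, |Φ.A ℓ i j| ≤ B) ∧ (∀ i, |Φ.b ℓ i| ≤ B)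

/-- All weights of the network belong to the set `S`. -/
def weightsIn (Φ : NeuralNet d L) (S : Set ℝ) : Prop :=
  ∀ ℓ < L, (∀ i j, Φ.A ℓ i j ∈ S) ∧ (∀ i, Φ.b ℓ i ∈ S)

end NeuralNet

/-- An activation function is acceptable if it is Lipschitz continuous, or differentiable
with derivative dominated by a polynomial. -/
def Acceptable (ρ : ℝ → ℝ) : Prop :=
  (∃ K : NNReal, LipschitzWith K ρ) ∨
    (Differentiable ℝ ρ ∧ ∃ q : Polynomial ℝ, ∀ x : ℝ, |deriv ρ x| ≤ |q.eval x|)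

/-!
For `ν ≥ 1` the rescaled activation `y ↦ ρ (ν² y) / ν ^ (2k)` is within `O(ν ^ (-min a k))` of
`y⁺ ^ k`, uniformly for `y` in a bounded set: for `|y| ≤ ν⁻¹` both are `O(ν⁻ᵏ)` by the growth bound,
and otherwise `|ν² y| ≥ ν`, where the quantitative limits of `ρ t / tᵏ` at `±∞` take over.
Composing `L` such maps, the errors being propagated by the Lipschitz bound of `(·)⁺ ^ k`,
`ρ^[L] (Λ² x) / Λ ^ (2 k^L)` approximates `x⁺ ^ k^L`. As `x ^ N = x⁺ ^ N + (-1) ^ N (-x)⁺ ^ N`, two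
parallel chains of activations, started at `Λ² x` and at `-Λ² x`, give `x ^ k^L` up to
`O(Λ ^ (-min a k))` with two nonzero weights per layer, and `Λ = B ε ^ (-m)` brings this below `ε`.
-/

lemma Fin.sum_univ_of_eq_one {M : Type*} [AddCommMonoid M] {n : ℕ} (h : n = 1) (f : Fin n → M) :
    ∑ j, f j = f ⟨0, by omega⟩ := by
  subst h; simp

lemma Fin.sum_univ_of_eq_two {M : Type*} [AddCommMonoid M] {n : ℕ} (h : n = 2) (f : Fin n → M) :
    ∑ j, f j = f ⟨0, by omega⟩ + f ⟨1, by omega⟩ := by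
  subst h; simp [Fin.sum_univ_two]

namespace NeuralNet

lemma realize_eq_sum {d L : ℕ} (Φ : NeuralNet d (L + 1)) (ρ : ℝ → ℝ) (x : Fin d → ℝ) :
    Φ.realize ρ x = ∑ i, ((∑ j, Φ.A L i j * Φ.hidden ρ x L j) + Φ.b L i) := rfl

noncomputable def twoChain (L : ℕ) (u₀ u₁ v₀ v₁ : ℝ) : NeuralNet 1 (L + 1) where
  width ℓ := if ℓ = 0 ∨ L + 1 ≤ ℓ then 1 else 2
  width_zero := by simp
  width_last := by simp
  A ℓ := Matrix.of fun i j =>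
    if ℓ = 0 then (if (i : ℕ) = 0 then u₀ else u₁)
    else if ℓ = L then (if (j : ℕ) = 0 then v₀ else v₁)
    else if (i : ℕ) = j then 1 else 0
  b _ _ := 0

variable {L : ℕ} {u₀ u₁ v₀ v₁ : ℝ}

lemma twoChain_A (ℓ : ℕ) (i j) : (twoChain L u₀ u₁ v₀ v₁).A ℓ i j =
    if ℓ = 0 then (if (i : ℕ) = 0 then u₀ else u₁)
    else if ℓ = L then (if (j : ℕ) = 0 then v₀ else v₁)
    else if (i : ℕ) = j then 1 else 0 := rfl

lemma twoChain_b (ℓ : ℕ) (i) : (twoChain L u₀ u₁ v₀ v₁).b ℓ i = 0 := rfl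

lemma twoChain_width_le (ℓ : ℕ) : (twoChain L u₀ u₁ v₀ v₁).width ℓ ≤ 2 := by
  simp only [twoChain]; split_ifs <;> norm_num

lemma twoChain_width_of_le {ℓ : ℕ} (h₁ : 1 ≤ ℓ) (h₂ : ℓ ≤ L) :
    (twoChain L u₀ u₁ v₀ v₁).width ℓ = 2 := by
  simp only [twoChain]; rw [if_neg]; omega

lemma twoChain_hidden (ρ : ℝ → ℝ) (x : Fin 1 → ℝ) {ℓ : ℕ} (h₁ : 1 ≤ ℓ) (h₂ : ℓ ≤ L)
    (i : Fin ((twoChain L u₀ u₁ v₀ v₁).width ℓ)) :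
    (twoChain L u₀ u₁ v₀ v₁).hidden ρ x ℓ i = ρ^[ℓ] ((if (i : ℕ) = 0 then u₀ else u₁) * x 0) := by
  induction ℓ, h₁ using Nat.le_induction with
  | base =>
    simp [hidden, Fin.sum_univ_of_eq_one (twoChain L u₀ u₁ v₀ v₁).width_zero, twoChain_A,
      twoChain_b]
  | succ n hn ih =>
    have hi : (i : ℕ) < 2 := i.2.trans_le (twoChain_width_le _)
    simp only [hidden, Fin.sum_univ_of_eq_two (twoChain_width_of_le hn (by omega : n ≤ L)),
      ih (by omega : n ≤ L), Function.iterate_succ_apply', twoChain_A, twoChain_b,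
      if_neg (by omega : n ≠ 0), if_neg (by omega : n ≠ L)]
    rcases (by omega : (i : ℕ) = 0 ∨ (i : ℕ) = 1) with h | h <;> simp [h]

lemma twoChain_realize (ρ : ℝ → ℝ) (x : Fin 1 → ℝ) (hL : 1 ≤ L) :
    (twoChain L u₀ u₁ v₀ v₁).realize ρ x = v₀ * ρ^[L] (u₀ * x 0) + v₁ * ρ^[L] (u₁ * x 0) := by
  have hL₀ : L ≠ 0 := by omega
  simp [realize_eq_sum, Fin.sum_univ_of_eq_one (twoChain L u₀ u₁ v₀ v₁).width_last,
    Fin.sum_univ_of_eq_two (twoChain_width_of_le hL le_rfl), twoChain_hidden ρ x hL le_rfl,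
    twoChain_A, twoChain_b, hL₀]

lemma twoChain_zero_realize (ρ : ℝ → ℝ) (x : Fin 1 → ℝ) :
    (twoChain 0 u₀ u₁ v₀ v₁).realize ρ x = u₀ * x 0 := by
  simp [realize_eq_sum, Fin.sum_univ_of_eq_one (twoChain 0 u₀ u₁ v₀ v₁).width_last,
    Fin.sum_univ_of_eq_one (twoChain 0 u₀ u₁ v₀ v₁).width_zero, twoChain_A, twoChain_b, hidden]

open Finset in
lemma twoChain_conn_le : (twoChain L u₀ u₁ v₀ v₁).conn ≤ 2 * L + 2 := by
  set Φ := twoChain L u₀ u₁ v₀ v₁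
  have hlayer : ∀ ℓ, #{p : Fin (Φ.width (ℓ + 1)) × Fin (Φ.width ℓ) | Φ.A ℓ p.1 p.2 ≠ 0} +
      #{i : Fin (Φ.width (ℓ + 1)) | Φ.b ℓ i ≠ 0} ≤ 2 := by
    intro ℓ
    simp only [Φ, twoChain_b, ne_eq, not_true_eq_false, filter_false, card_empty, add_zero]
    by_cases hmid : ℓ ≠ 0 ∧ ℓ ≠ L
    · -- the middle layers are diagonal, so a nonzero entry is determined by its row
      calc _ ≤ #(univ : Finset (Fin (Φ.width (ℓ + 1)))) := by
            refine card_le_card_of_injOn Prod.fst (fun _ _ => mem_univ _) ?_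
            intro p hp q hq hpq
            simp only [coe_filter, Set.mem_ofPred_eq, twoChain_A, if_neg hmid.1, if_neg hmid.2,
              ite_ne_right_iff, mem_univ, true_and] at hp hq
            ext <;> omega
        _ ≤ 2 := by rw [card_univ, Fintype.card_fin]; exact twoChain_width_le _
    · calc _ ≤ Φ.width (ℓ + 1) * Φ.width ℓ := by
            simpa using card_filter_le (univ : Finset (Fin (Φ.width (ℓ + 1)) × Fin (Φ.width ℓ))) _
        _ ≤ 2 := by
            rcases not_and_or.mp hmid with h | h <;> rw [not_not] at h
            · rw [h, Φ.width_zero, mul_one]; exact twoChain_width_le 1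
            · rw [h, Φ.width_last, one_mul]; exact twoChain_width_le L
  calc Φ.conn ≤ ∑ _ℓ ∈ range (L + 1), 2 := sum_le_sum fun ℓ _ => hlayer ℓ
    _ = 2 * L + 2 := by simp; ring

lemma twoChain_weightsBdd {B : ℝ} (hB : 1 ≤ B) (hu₀ : |u₀| ≤ B) (hu₁ : |u₁| ≤ B)
    (hv₀ : |v₀| ≤ B) (hv₁ : |v₁| ≤ B) : (twoChain L u₀ u₁ v₀ v₁).weightsBdd B := by
  refine fun ℓ _ => ⟨fun i j => ?_, fun i => ?_⟩
  · rw [twoChain_A]; split_ifs <;> simp [*, hB.trans' zero_le_one]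
  · simp [twoChain_b, hB.trans' zero_le_one]

lemma weightsBdd.mono {d L : ℕ} {Φ : NeuralNet d L} {B B' : ℝ} (h : Φ.weightsBdd B) (hB : B ≤ B') :
    Φ.weightsBdd B' :=
  fun ℓ hℓ => ⟨fun i j => (h ℓ hℓ).1 i j |>.trans hB, fun i => (h ℓ hℓ).2 i |>.trans hB⟩

noncomputable def powerNet (L k : ℕ) (Λ : ℝ) : NeuralNet 1 (L + 1) :=
  twoChain L (Λ ^ 2) (-Λ ^ 2) ((Λ ^ k ^ L) ^ 2)⁻¹ ((-1) ^ k ^ L * ((Λ ^ k ^ L) ^ 2)⁻¹)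

variable {k : ℕ} {Λ : ℝ}

lemma powerNet_conn_le : (powerNet L k Λ).conn ≤ 2 * L + 2 := twoChain_conn_le

lemma powerNet_weightsBdd (hΛ : 1 ≤ Λ) : (powerNet L k Λ).weightsBdd (Λ ^ 2) := by
  have hΛ₂ : 1 ≤ Λ ^ 2 := one_le_pow₀ hΛ
  have hw : |((Λ ^ k ^ L) ^ 2)⁻¹| ≤ Λ ^ 2 := by
    rw [abs_of_nonneg (by positivity)]
    exact (inv_le_one_of_one_le₀ (one_le_pow₀ (one_le_pow₀ hΛ))).trans hΛ₂
  refine twoChain_weightsBdd hΛ₂ ?_ ?_ hw ?_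
  · rw [abs_of_nonneg (sq_nonneg Λ)]
  · rw [abs_neg, abs_of_nonneg (sq_nonneg Λ)]
  · simpa [abs_mul] using hw

lemma powerNet_zero_realize (ρ : ℝ → ℝ) (x : Fin 1 → ℝ) :
    (powerNet 0 k Λ).realize ρ x = Λ ^ 2 * x 0 :=
  twoChain_zero_realize ρ x

lemma powerNet_realize (ρ : ℝ → ℝ) (x : ℝ) (hL : 1 ≤ L) :
    (powerNet L k Λ).realize ρ (fun _ => x) = ρ^[L] (Λ ^ 2 * x) / (Λ ^ k ^ L) ^ 2
      + (-1) ^ k ^ L * (ρ^[L] (Λ ^ 2 * -x) / (Λ ^ k ^ L) ^ 2) := by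
  rw [powerNet, twoChain_realize _ _ hL, neg_mul, ← mul_neg]
  ring

end NeuralNet

lemma pow_eq_posPart_pow_add_negPart_pow {N : ℕ} (hN : N ≠ 0) (x : ℝ) :
    x ^ N = x⁺ ^ N + (-1) ^ N * x⁻ ^ N := by
  rcases le_total 0 x with hx | hx
  · simp [posPart_of_nonneg hx, negPart_of_nonneg hx, hN]
  · simp [posPart_of_nonpos hx, negPart_of_nonpos hx, hN, ← mul_pow]

lemma abs_pow_sub_add_neg_le {N : ℕ} (hN : N ≠ 0) {f : ℝ → ℝ} {x δ : ℝ}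
    (hpos : |f x - x⁺ ^ N| ≤ δ) (hneg : |f (-x) - (-x)⁺ ^ N| ≤ δ) :
    |x ^ N - (f x + (-1) ^ N * f (-x))| ≤ 2 * δ := by
  rw [posPart_neg] at hneg
  calc |x ^ N - (f x + (-1) ^ N * f (-x))|
      = |(x⁺ ^ N - f x) + (-1) ^ N * (x⁻ ^ N - f (-x))| := by
        rw [pow_eq_posPart_pow_add_negPart_pow hN x]; ring_nf
    _ ≤ |f x - x⁺ ^ N| + |f (-x) - x⁻ ^ N| := by
        grw [abs_add_le]; simp [abs_mul, abs_sub_comm]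
    _ ≤ 2 * δ := by linarith

lemma exists_one_le_mul_rpow_neg_le {e T : ℝ} (he : 0 < e) (hT : 1 ≤ T) :
    ∃ B ≥ 1, ∃ m : ℕ, 0 < m ∧ ∀ ε : ℝ, 0 < ε → ε ≤ 1 → T * (B / ε ^ m) ^ (-e) ≤ ε := by
  refine ⟨T ^ e⁻¹, Real.one_le_rpow hT (by positivity), ⌈e⁻¹⌉₊, Nat.ceil_pos.2 (by positivity),
    fun ε hε hε1 => ?_⟩
  have hme : 1 ≤ (⌈e⁻¹⌉₊ : ℝ) * e := by
    rw [← inv_mul_cancel₀ he.ne']; gcongr; exact Nat.le_ceil _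
  have hT0 : 0 < T := by linarith
  calc T * (T ^ e⁻¹ / ε ^ ⌈e⁻¹⌉₊) ^ (-e) = ε ^ ((⌈e⁻¹⌉₊ : ℝ) * e) := by
        rw [Real.div_rpow (by positivity) (by positivity), ← Real.rpow_mul hT0.le,
          ← Real.rpow_natCast, ← Real.rpow_mul hε.le, mul_neg, mul_neg, inv_mul_cancel₀ he.ne',
          Real.rpow_neg hT0.le, Real.rpow_neg hε.le, Real.rpow_one]
        field_simp
    _ ≤ ε ^ (1 : ℝ) := Real.rpow_le_rpow_of_exponent_ge hε hε1 hme
    _ = ε := Real.rpow_one ε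

section Rescaling

variable {ρ : ℝ → ℝ} {k : ℕ} {a C : ℝ}
  (h_growth : ∀ x : ℝ, |ρ x| ≤ C * (1 + |x|) ^ k)
  (h_neg : ∀ x : ℝ, x < 0 → |ρ x / x ^ k| ≤ C * |x| ^ (-a))
  (h_pos : ∀ x : ℝ, 0 < x → |ρ x / x ^ k - 1| ≤ C * x ^ (-a))
include h_neg h_pos

lemma abs_div_pow_sub_ite_le {t : ℝ} (ht : t ≠ 0) :
    |ρ t / t ^ k - if 0 < t then 1 else 0| ≤ C * |t| ^ (-a) := by
  rcases ht.lt_or_gt with ht | ht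
  · simpa [ht.not_gt] using h_neg t ht
  · simpa [ht, abs_of_pos ht] using h_pos t ht

include h_growth

lemma abs_div_sub_posPart_pow_le (hk : k ≠ 0) (ha : 0 ≤ a) {ν M y : ℝ} (hν : 1 ≤ ν)
    (hy : |y| ≤ M) :
    |ρ (ν ^ 2 * y) / (ν ^ k) ^ 2 - y⁺ ^ k| ≤ (C * 2 ^ k + C * M ^ k + 1) * ν ^ (-min a k) := by
  have hC : 0 ≤ C := by simpa using (abs_nonneg _).trans (h_growth 0)
  have hν₀ : 0 < ν := by linarith
  have hν₁ : ν ^ 2 * ν⁻¹ = ν := by field_simp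
  have h2k : 0 ≤ C * 2 ^ k := by positivity
  have hM : 0 ≤ M := (abs_nonneg y).trans hy
  have hMk : 0 ≤ C * M ^ k := by positivity
  set t := ν ^ 2 * y with ht
  have habs_t : |t| = ν ^ 2 * |y| := by rw [ht, abs_mul, abs_of_pos (by positivity)]
  rcases le_or_gt |y| ν⁻¹ with hsmall | hlarge
  · -- `ρ t` and `y⁺ ^ k` are both `O(ν⁻ᵏ)` because `|t| ≤ ν`
    have hρt : |ρ t| ≤ C * 2 ^ k * ν ^ k := by
      have : 1 + |t| ≤ 2 * ν := by
        have : |t| ≤ ν := habs_t ▸ (mul_le_mul_of_nonneg_left hsmall (by positivity)).trans_eq hν₁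
        linarith
      calc |ρ t| ≤ C * (2 * ν) ^ k := by grw [h_growth, this]
        _ = C * 2 ^ k * ν ^ k := by ring
    have hyk : |y⁺ ^ k| ≤ (ν ^ k)⁻¹ := by
      rw [abs_of_nonneg (by positivity), ← inv_pow]
      exact pow_le_pow_left₀ (posPart_nonneg y)
        ((sup_le (le_abs_self y) (abs_nonneg y)).trans hsmall) k
    calc |ρ t / (ν ^ k) ^ 2 - y⁺ ^ k| ≤ |ρ t| / (ν ^ k) ^ 2 + |y⁺ ^ k| := by
          grw [abs_sub, abs_div, abs_of_pos (by positivity : (0:ℝ) < (ν ^ k) ^ 2)]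
      _ ≤ C * 2 ^ k * ν ^ k / (ν ^ k) ^ 2 + (ν ^ k)⁻¹ := by grw [hρt, hyk]
      _ = (C * 2 ^ k + 1) * ν ^ (-(k : ℝ)) := by
          rw [Real.rpow_neg hν₀.le, Real.rpow_natCast]; field_simp
      _ ≤ (C * 2 ^ k + C * M ^ k + 1) * ν ^ (-min a k) := by
          gcongr ?_ * ν ^ ?_
          · linarith
          · exact neg_le_neg (min_le_right a k)
  · -- in the tail, `ρ t / t ^ k` is within `C |t|⁻ᵃ ≤ C ν⁻ᵃ` of its limit
    have hνt : ν ≤ |t| :=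
      habs_t ▸ hν₁.symm.trans_le (mul_le_mul_of_nonneg_left hlarge.le (by positivity))
    have ht₀ : t ≠ 0 := abs_pos.1 (hν₀.trans_le hνt)
    have hsplit : ρ t / (ν ^ k) ^ 2 - y⁺ ^ k = y ^ k * (ρ t / t ^ k - if 0 < t then 1 else 0) := by
      have hy₀ : y ≠ 0 := by rintro rfl; simp [ht] at ht₀
      have hpos : 0 < t ↔ 0 < y := by rw [ht]; exact mul_pos_iff_of_pos_left (by positivity)
      split_ifs with h
      · rw [posPart_of_nonneg (hpos.1 h).le, ht]; field_simp; ring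
      · rw [posPart_of_nonpos (not_lt.1 (hpos.not.1 h)), zero_pow hk, ht]; field_simp; ring
    calc |ρ t / (ν ^ k) ^ 2 - y⁺ ^ k| ≤ M ^ k * (C * ν ^ (-a)) := by
          rw [hsplit, abs_mul, abs_pow]
          gcongr
          refine (abs_div_pow_sub_ite_le h_neg h_pos ht₀).trans ?_
          exact mul_le_mul_of_nonneg_left (Real.rpow_le_rpow_of_nonpos hν₀ hνt (neg_nonpos.2 ha)) hC
      _ ≤ (C * 2 ^ k + C * M ^ k + 1) * ν ^ (-min a k) := by
          rw [← mul_assoc, mul_comm (M ^ k)]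
          gcongr ?_ * ν ^ ?_
          · linarith
          · exact neg_le_neg (min_le_left a k)

lemma abs_iterate_div_sub_posPart_pow_le (hk : k ≠ 0) (ha : 0 ≤ a) {L : ℕ} {M Λ x : ℝ}
    (hΛ : 1 ≤ Λ) (hxM : ∀ ℓ < L, |x| ^ k ^ ℓ + 1 ≤ M)
    (hsmall : (C * 2 ^ k + C * M ^ k + 1) * (k * M ^ (k - 1) + 1) ^ L * Λ ^ (-min a k) ≤ 1)
    {ℓ : ℕ} (hℓ : 1 ≤ ℓ) (hℓL : ℓ ≤ L) :
    |ρ^[ℓ] (Λ ^ 2 * x) / (Λ ^ k ^ ℓ) ^ 2 - x⁺ ^ k ^ ℓ|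
      ≤ (C * 2 ^ k + C * M ^ k + 1) * (k * M ^ (k - 1) + 1) ^ ℓ * Λ ^ (-min a k) := by
  set E := C * 2 ^ k + C * M ^ k + 1
  set K := (k : ℝ) * M ^ (k - 1)
  have hx : |x| + 1 ≤ M := by simpa using hxM 0 (by omega)
  have hM : 1 ≤ M := by linarith [abs_nonneg x]
  have hE : 0 ≤ E := by
    have hC : 0 ≤ C := by simpa using (abs_nonneg _).trans (h_growth 0)
    positivity
  have hK : 0 ≤ K := by positivity
  have hΛ₀ : 0 < Λ := by linarith
  have he : 0 ≤ Λ ^ (-min a k) := by positivity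
  induction ℓ, hℓ using Nat.le_induction with
  | base =>
    simp only [Function.iterate_one, pow_one]
    calc _ ≤ E * Λ ^ (-min a k) := abs_div_sub_posPart_pow_le h_growth h_neg h_pos hk ha hΛ
            (by linarith)
      _ ≤ E * (K + 1) * Λ ^ (-min a k) := by gcongr; nlinarith
  | succ n hn ih =>
    set ν := Λ ^ k ^ n
    set y := ρ^[n] (Λ ^ 2 * x) / ν ^ 2
    set q := x⁺ ^ k ^ n
    have hν : 1 ≤ ν := one_le_pow₀ hΛ
    have hyq : |y - q| ≤ E * (K + 1) ^ n * Λ ^ (-min a k) := ih (by omega)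
    have hyq₁ : |y - q| ≤ 1 := hyq.trans (le_trans (by gcongr; linarith; omega) hsmall)
    have hq : 0 ≤ q := by positivity
    have hqM : q + 1 ≤ M := by
      have : q ≤ |x| ^ k ^ n :=
        pow_le_pow_left₀ (posPart_nonneg x) (sup_le (le_abs_self x) (abs_nonneg x)) _
      linarith [hxM n (by omega)]
    have hyM : |y| ≤ M := by linarith [abs_sub_abs_le_abs_sub y q, abs_of_nonneg hq]
    -- the error of the new layer, plus the old error pushed through `(·)⁺ ^ k`
    have hlayer : |ρ (ν ^ 2 * y) / (ν ^ k) ^ 2 - y⁺ ^ k| ≤ E * Λ ^ (-min a k) := by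
      refine (abs_div_sub_posPart_pow_le h_growth h_neg h_pos hk ha hν hyM).trans ?_
      exact mul_le_mul_of_nonneg_left (Real.rpow_le_rpow_of_nonpos hΛ₀
        (le_self_pow₀ hΛ (by positivity)) (neg_nonpos.2 (le_min ha (Nat.cast_nonneg k)))) hE
    have hlip : |y⁺ ^ k - q ^ k| ≤ K * |y - q| := by
      have h₁ : |y⁺ - q⁺| ≤ |y - q| := abs_sup_sub_sup_le_abs y q 0
      rw [posPart_of_nonneg hq] at h₁
      have h₂ : max |y⁺| |q| ≤ M := by
        rw [abs_of_nonneg (posPart_nonneg y), abs_of_nonneg hq]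
        exact max_le ((sup_le (le_abs_self y) (abs_nonneg y)).trans hyM) (by linarith)
      calc |y⁺ ^ k - q ^ k| ≤ |y⁺ - q| * k * max |y⁺| |q| ^ (k - 1) := abs_pow_sub_pow_le ..
        _ ≤ |y - q| * k * M ^ (k - 1) :=
            mul_le_mul (mul_le_mul_of_nonneg_right h₁ (by positivity))
              (pow_le_pow_left₀ (by positivity) h₂ _) (by positivity) (by positivity)
        _ = K * |y - q| := by ring
    have hνy : ν ^ 2 * y = ρ^[n] (Λ ^ 2 * x) := mul_div_cancel₀ _ (by positivity)
    calc |ρ^[n + 1] (Λ ^ 2 * x) / (Λ ^ k ^ (n + 1)) ^ 2 - x⁺ ^ k ^ (n + 1)|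
        = |(ρ (ν ^ 2 * y) / (ν ^ k) ^ 2 - y⁺ ^ k) + (y⁺ ^ k - q ^ k)| := by
          have hν' : Λ ^ k ^ (n + 1) = ν ^ k := by rw [pow_succ, pow_mul]
          have hq' : x⁺ ^ k ^ (n + 1) = q ^ k := by rw [pow_succ, pow_mul]
          rw [hνy, Function.iterate_succ_apply', hν', hq']
          ring_nf
      _ ≤ E * Λ ^ (-min a k) + K * (E * (K + 1) ^ n * Λ ^ (-min a k)) := by
          grw [abs_add_le, hlayer, hlip, hyq]
      _ ≤ E * (K + 1) ^ (n + 1) * Λ ^ (-min a k) := by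
          have : 1 + K * (K + 1) ^ n ≤ (K + 1) ^ (n + 1) := by
            rw [pow_succ]; nlinarith [one_le_pow₀ (by linarith : (1 : ℝ) ≤ K + 1) (n := n)]
          calc _ = E * Λ ^ (-min a k) * (1 + K * (K + 1) ^ n) := by ring
            _ ≤ E * Λ ^ (-min a k) * (K + 1) ^ (n + 1) := by gcongr
            _ = _ := by ring

lemma abs_pow_sub_powerNet_realize_le (hk : k ≠ 0) (ha : 0 ≤ a) {L : ℕ} (hL : 1 ≤ L) {M Λ x : ℝ}
    (hΛ : 1 ≤ Λ) (hxM : ∀ ℓ < L, |x| ^ k ^ ℓ + 1 ≤ M)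
    (hsmall : (C * 2 ^ k + C * M ^ k + 1) * (k * M ^ (k - 1) + 1) ^ L * Λ ^ (-min a k) ≤ 1) :
    |x ^ k ^ L - (NeuralNet.powerNet L k Λ).realize ρ fun _ => x|
      ≤ 2 * ((C * 2 ^ k + C * M ^ k + 1) * (k * M ^ (k - 1) + 1) ^ L * Λ ^ (-min a k)) := by
  rw [NeuralNet.powerNet_realize ρ x hL]
  exact abs_pow_sub_add_neg_le (f := fun y => ρ^[L] (Λ ^ 2 * y) / (Λ ^ k ^ L) ^ 2) (by positivity)
    (abs_iterate_div_sub_posPart_pow_le h_growth h_neg h_pos hk ha hΛ hxM hsmall hL le_rfl)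
    (abs_iterate_div_sub_posPart_pow_le h_growth h_neg h_pos hk ha hΛ (by simpa using hxM) hsmall
      hL le_rfl)

end Rescaling

open NeuralNet

theorem approx_power_kL_general
    (L k : ℕ) (a b C : ℝ) (ρ : ℝ → ℝ) (hk : 1 ≤ k)
    (ha : 0 < a)
    (hρ : StronglySigmoidal ρ k a b C) :
    ∀ D : ℝ, 0 < D → ∃ (A : ℝ) (n : ℕ), 0 < A ∧ 0 < n ∧
      ∀ ε : ℝ, 0 < ε → ε < 1 →
        ∃ Φ : NeuralNet 1 (L + 1), Φ.conn ≤ 2 * L + 2 ∧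
          Φ.weightsBdd (A * (ε ^ n)⁻¹) ∧
          ∀ x : ℝ, |x| ≤ D →
            |x ^ k ^ L - Φ.realize ρ fun _ => x| ≤ ε := by
  obtain ⟨⟨-, -, -, h_growth⟩, -, h_neg, h_pos, -⟩ := hρ
  intro D _
  rcases Nat.eq_zero_or_pos L with rfl | hL
  · refine ⟨1, 1, one_pos, one_pos, fun ε hε hε1 => ⟨powerNet 0 k 1, powerNet_conn_le,
      (powerNet_weightsBdd le_rfl).mono ?_, fun x _ => by simp [powerNet_zero_realize, hε.le]⟩⟩
    simpa using (one_le_inv₀ hε).2 hε1.le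
  set M := max D 1 ^ k ^ L + 1
  set EL := (C * 2 ^ k + C * M ^ k + 1) * (k * M ^ (k - 1) + 1) ^ L
  have hEL : 1 ≤ EL := by
    have hC : 0 ≤ C := by simpa using (abs_nonneg _).trans (h_growth 0)
    have hM : 0 ≤ M := by positivity
    have hE : 0 ≤ C * 2 ^ k + C * M ^ k := by positivity
    have hK : 0 ≤ (k : ℝ) * M ^ (k - 1) := by positivity
    exact one_le_mul_of_one_le_of_one_le (by linarith) (one_le_pow₀ (by linarith))
  obtain ⟨B, hB, m, hm, hscale⟩ :=
    exists_one_le_mul_rpow_neg_le (e := min a k) (by positivity) (T := 2 * EL) (by linarith)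
  refine ⟨B ^ 2, 2 * m, by positivity, by omega, fun ε hε hε1 => ?_⟩
  have hΛ : 1 ≤ B / ε ^ m := by
    rw [le_div_iff₀ (by positivity), one_mul]; exact (pow_le_one₀ hε.le hε1.le).trans hB
  have herr := hscale ε hε hε1.le
  refine ⟨powerNet L k (B / ε ^ m), powerNet_conn_le, (powerNet_weightsBdd hΛ).mono
    (by rw [div_pow, ← pow_mul, mul_comm m]; rfl), fun x hx => ?_⟩
  refine (abs_pow_sub_powerNet_realize_le h_growth h_neg h_pos (by omega) ha.le hL (M := M) hΛ
    (fun ℓ hℓ => ?_) (by nlinarith [Real.rpow_nonneg (zero_le_one.trans hΛ) (-min a k)])).trans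
    (by linarith)
  have : |x| ^ k ^ ℓ ≤ max D 1 ^ k ^ L :=
    (pow_le_pow_left₀ (abs_nonneg x) (hx.trans (le_max_left D 1)) _).trans
      (pow_le_pow_right₀ (le_max_right D 1) (Nat.pow_le_pow_right hk hℓ.le))
  linarith

/-- Approximation of `x^{k^L}` on `[-D,D]` by a network with `L+1` layers
and connectivity at most `2L+2`, with weights bounded by `A·ε^{-n}`, where `A > 0` and the
positive integer `n` depend only on `L, k, a, b, D`. -/
theorem approx_power_kL
    (L k : ℕ) (a b C : ℝ) (ρ : ℝ → ℝ) (hk : 1 ≤ k)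
    (ha : 0 < a) (hb : 0 < b) (hC : 0 < C)
    (hρ : StronglySigmoidal ρ k a b C) :
    ∀ D : ℝ, 0 < D → ∃ (A : ℝ) (n : ℕ), 0 < A ∧ 0 < n ∧
      ∀ ε : ℝ, 0 < ε → ε < 1 →
        ∃ Φ : NeuralNet 1 (L + 1), Φ.conn ≤ 2 * L + 2 ∧
          Φ.weightsBdd (A * (ε ^ n)⁻¹) ∧
          ∀ x : ℝ, |x| ≤ D →
            |x ^ k ^ L - Φ.realize ρ fun _ => x| ≤ ε :=
  approx_power_kL_general L k a b C ρ hk ha hρ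
end

section
/- Let D > 0 and let ρ : ℝ → ℝ be strongly sigmoidal of order k with constants a, b, C > 0. Then there exist A > 0 and a positive integer n depending only on k and a such that for every sufficiently small ε > 0 there is a neural network Ψ ∈ NN_{2,3(k+1),1,ρ} satisfying |x_+ − Ψ(x)| ≤ ε for all |x| ≤ D, with all weights of Ψ bounded in absolute value by A·ε^{−n}. -/
open MeasureTheory Filter
open scoped Classical ENNReal NNReal

/-!
For a strongly sigmoidal `ρ` of order `k`, `ρ (α t) / α ^ k` converges to the truncated power
`t₊ ^ k` uniformly on compacts as `α → ∞`, at a polynomial rate governed by `a`. The `(k - 1)`-th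
forward difference of `t₊ ^ k` with step `h`, divided by `k! h ^ (k - 1)`, is an affine function
of slope `1` on `x ≥ 0` (a `(k - 1)`-th difference of a degree `k` polynomial) and is `O(h)` on
`x ≤ 0`; after subtracting its value at `0` it approximates `x₊` within `O(h)`. Replacing `t₊ ^ k`
by `ρ (α t) / α ^ k` gives a network with `k` hidden neurons. The difference operator amplifies
errors by at most `2 ^ (k - 1) / h ^ (k - 1)`, so an activation error of order `h ^ k` suffices,
and this costs `α` polynomial in `1 / h`.
-/

open Finset fwdDiff
open scoped Nat

theorem abs_fwdDiff_iter_le {f : ℝ → ℝ} {h x B : ℝ} {n : ℕ}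
    (hf : ∀ j ≤ n, |f (x + j * h)| ≤ B) : |(Δ_[h])^[n] f x| ≤ 2 ^ n * B := by
  have hchoose : (2 : ℝ) ^ n = ∑ j ∈ range (n + 1), (n.choose j : ℝ) := by
    exact_mod_cast (Nat.sum_range_choose n).symm
  rw [fwdDiff_iter_eq_sum_shift, hchoose, sum_mul]
  refine (abs_sum_le_sum_abs _ _).trans (sum_le_sum fun j hj => ?_)
  have hj : j ≤ n := Nat.lt_succ_iff.mp (mem_range.mp hj)
  rw [zsmul_eq_mul, nsmul_eq_mul, abs_mul]
  push_cast
  rw [abs_mul, abs_pow, abs_neg, abs_one, one_pow, one_mul, Nat.abs_cast]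
  exact mul_le_mul_of_nonneg_left (hf j hj) (Nat.cast_nonneg _)

theorem fwdDiff_iter_congr {f g : ℝ → ℝ} {h x : ℝ} {n : ℕ}
    (hfg : ∀ j ≤ n, f (x + j * h) = g (x + j * h)) : (Δ_[h])^[n] f x = (Δ_[h])^[n] g x := by
  simp only [fwdDiff_iter_eq_sum_shift, nsmul_eq_mul]
  exact sum_congr rfl fun j hj => by rw [hfg j (Nat.lt_succ_iff.mp (mem_range.mp hj))]

theorem fwdDiff_iter_comp_mul {R : Type*} [CommRing R] (f : R → R) (h y : R) (n : ℕ) :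
    (Δ_[h])^[n] f (h * y) = (Δ_[1])^[n] (fun r => f (h * r)) y := by
  simp only [fwdDiff_iter_eq_sum_shift, nsmul_eq_mul, mul_one, mul_add, mul_comm _ h]

theorem fwdDiff_iter_one_pow_succ {R : Type*} [CommRing R] (n : ℕ) (y : R) :
    (Δ_[1])^[n] (fun r => r ^ (n + 1)) y = (n + 1)! * y + (Δ_[1])^[n] (fun r => r ^ (n + 1)) 0 := by
  have hexp : (fun r : R => (r + y) ^ (n + 1)) =
      (fun r => ∑ i ∈ range n, (y ^ (n + 1 - i) * (n + 1).choose i) * r ^ i) +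
        ((n + 1 : R) * y) • (fun r => r ^ n) + fun r => r ^ (n + 1) := by
    ext r
    simp [add_pow, sum_range_succ, mul_comm, mul_assoc, mul_left_comm]
  have hshift := fwdDiff_iter_comp_add (h := (1 : R)) (fun r => r ^ (n + 1)) y n 0
  rw [zero_add] at hshift
  rw [← hshift, hexp, fwdDiff_iter_add, fwdDiff_iter_add, fwdDiff_iter_sum_mul_pow_eq_zero,
    fwdDiff_iter_const_smul, fwdDiff_iter_eq_factorial]
  simp only [zero_add, Pi.add_apply, Pi.smul_apply, Pi.natCast_apply, smul_eq_mul,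
    Nat.factorial_succ, Nat.cast_mul, Nat.cast_add, Nat.cast_one, add_left_inj]
  ring

theorem fwdDiff_iter_sub {M G : Type*} [AddCommMonoid M] [AddCommGroup G] (h : M) (f g : M → G)
    (n : ℕ) : (Δ_[h])^[n] (f - g) = (Δ_[h])^[n] f - (Δ_[h])^[n] g := by
  simpa only [fwdDiff_aux.coe_fwdDiffₗ_pow] using map_sub (fwdDiff_aux.fwdDiffₗ M G h ^ n) f g

theorem fwdDiff_iter_pow_succ {K : Type*} [Field K] {h : K} (hh : h ≠ 0) (n : ℕ) (x : K) :
    (Δ_[h])^[n] (fun r => r ^ (n + 1)) x =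
      (n + 1)! * h ^ n * x + (Δ_[h])^[n] (fun r => r ^ (n + 1)) 0 := by
  have hscale : ∀ y, (Δ_[h])^[n] (fun r => r ^ (n + 1)) (h * y) =
      h ^ (n + 1) * (Δ_[1])^[n] (fun r => r ^ (n + 1)) y := fun y => by
    simp_rw [fwdDiff_iter_comp_mul, mul_pow]
    exact congrFun (fwdDiff_iter_const_smul _ (h ^ (n + 1)) (fun r : K => r ^ (n + 1)) n) y
  rw [← mul_div_cancel₀ x hh, ← mul_zero h, hscale, hscale, fwdDiff_iter_one_pow_succ]
  field_simp
  ring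

noncomputable def truncPow (k : ℕ) (t : ℝ) : ℝ := max t 0 ^ k

-- The constant subtracted is the one for `t₊ ^ (n + 1)` whatever `f` is, so that it can serve as
-- the bias of a network.
noncomputable def reluApprox (n : ℕ) (h : ℝ) (f : ℝ → ℝ) (x : ℝ) : ℝ :=
  ((Δ_[h])^[n] f x - (Δ_[h])^[n] (truncPow (n + 1)) 0) / ((n + 1)! * h ^ n)

section ReluApprox

variable {n : ℕ} {h : ℝ}

theorem reluApprox_truncPow_of_nonneg (hh : 0 < h) {x : ℝ} (hx : 0 ≤ x) :
    reluApprox n h (truncPow (n + 1)) x = x := by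
  have hpow : ∀ y, 0 ≤ y →
      (Δ_[h])^[n] (truncPow (n + 1)) y = (Δ_[h])^[n] (fun r => r ^ (n + 1)) y :=
    fun y hy => fwdDiff_iter_congr fun j _ => by
      rw [truncPow, max_eq_left (by positivity)]
  rw [reluApprox, hpow x hx, hpow 0 le_rfl, fwdDiff_iter_pow_succ hh.ne', add_sub_cancel_right]
  field_simp

theorem abs_fwdDiff_iter_truncPow_le_of_nonpos (hh : 0 ≤ h) {y : ℝ} (hy : y ≤ 0) :
    |(Δ_[h])^[n] (truncPow (n + 1)) y| ≤ 2 ^ n * (n * h) ^ (n + 1) :=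
  abs_fwdDiff_iter_le fun j hj => by
    have hjh : (j : ℝ) * h ≤ n * h := by gcongr
    rw [truncPow, abs_pow, abs_of_nonneg (le_max_right _ _)]
    exact pow_le_pow_left₀ (le_max_right _ _) (max_le (by linarith) (by positivity)) _

theorem abs_reluApprox_truncPow_le_of_nonpos (hh : 0 < h) {x : ℝ} (hx : x ≤ 0) :
    |reluApprox n h (truncPow (n + 1)) x| ≤ (2 * n) ^ (n + 1) * h := by
  rw [reluApprox, abs_div, abs_of_pos (by positivity : (0 : ℝ) < (n + 1)! * h ^ n),
    div_le_iff₀ (by positivity)]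
  calc _ ≤ 2 ^ n * (n * h) ^ (n + 1) + 2 ^ n * (n * h) ^ (n + 1) :=
        (abs_sub _ _).trans (add_le_add (abs_fwdDiff_iter_truncPow_le_of_nonpos hh.le hx)
          (abs_fwdDiff_iter_truncPow_le_of_nonpos hh.le le_rfl))
    _ = (2 * n) ^ (n + 1) * h * h ^ n := by ring
    _ ≤ (2 * n) ^ (n + 1) * h * ((n + 1)! * h ^ n) := by
        gcongr
        exact le_mul_of_one_le_left (by positivity) (Nat.one_le_cast.mpr (Nat.factorial_pos _))

theorem abs_sub_reluApprox_truncPow_le (hh : 0 < h) (x : ℝ) :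
    |max x 0 - reluApprox n h (truncPow (n + 1)) x| ≤ (2 * n) ^ (n + 1) * h := by
  rcases le_total 0 x with hx | hx
  · rw [reluApprox_truncPow_of_nonneg hh hx, max_eq_left hx, sub_self, abs_zero]
    positivity
  · rw [max_eq_right hx, zero_sub, abs_neg]
    exact abs_reluApprox_truncPow_le_of_nonpos hh hx

theorem abs_reluApprox_sub_le (hh : 0 < h) {f g : ℝ → ℝ} {x E : ℝ}
    (hfg : ∀ j ≤ n, |f (x + j * h) - g (x + j * h)| ≤ E) :
    |reluApprox n h f x - reluApprox n h g x| ≤ (2 / h) ^ n * E := by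
  have hdiff : reluApprox n h f x - reluApprox n h g x =
      (Δ_[h])^[n] (f - g) x / ((n + 1)! * h ^ n) := by
    rw [reluApprox, reluApprox, fwdDiff_iter_sub, Pi.sub_apply]
    ring
  rw [hdiff, abs_div, abs_of_pos (by positivity : (0 : ℝ) < (n + 1)! * h ^ n),
    div_le_iff₀ (by positivity)]
  calc _ ≤ 2 ^ n * E := abs_fwdDiff_iter_le hfg
    _ = (2 / h) ^ n * E * h ^ n := by rw [div_pow]; field_simp
    _ ≤ (2 / h) ^ n * E * ((n + 1)! * h ^ n) := by
        have hE : 0 ≤ E := (abs_nonneg _).trans (hfg 0 (Nat.zero_le _))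
        gcongr
        exact le_mul_of_one_le_left (by positivity) (Nat.one_le_cast.mpr (Nat.factorial_pos _))

end ReluApprox

section Activation

variable {ρ : ℝ → ℝ} {k : ℕ} {a C : ℝ}

theorem truncPow_mul {α : ℝ} (hα : 0 ≤ α) (t : ℝ) : truncPow k (α * t) = α ^ k * truncPow k t := by
  rw [truncPow, truncPow, ← mul_pow, mul_max_of_nonneg _ _ hα, mul_zero]

theorem abs_truncPow_sub_le_of_ne_zero (hk : k ≠ 0)
    (hneg : ∀ x : ℝ, x < 0 → |ρ x / x ^ k| ≤ C * |x| ^ (-a))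
    (hpos : ∀ x : ℝ, 0 < x → |ρ x / x ^ k - 1| ≤ C * x ^ (-a)) {u : ℝ} (hu : u ≠ 0) :
    |truncPow k u - ρ u| ≤ C * |u| ^ (-a) * |u| ^ k := by
  rcases hu.lt_or_gt with hu | hu
  · have hsplit : truncPow k u - ρ u = -(ρ u / u ^ k) * u ^ k := by
      rw [truncPow, max_eq_right hu.le, zero_pow hk]
      field_simp
      ring
    rw [hsplit, abs_mul, abs_neg, abs_pow]
    exact mul_le_mul_of_nonneg_right (hneg u hu) (by positivity)
  · have hsplit : truncPow k u - ρ u = -(ρ u / u ^ k - 1) * u ^ k := by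
      rw [truncPow, max_eq_left hu.le]
      field_simp
      ring
    rw [hsplit, abs_mul, abs_neg, abs_pow, abs_of_pos hu]
    exact mul_le_mul_of_nonneg_right (hpos u hu) (by positivity)

theorem abs_truncPow_sub_le_of_abs_le (hgrowth : ∀ x : ℝ, |ρ x| ≤ C * (1 + |x|) ^ k)
    {u s : ℝ} (hs : 1 ≤ s) (hu : |u| ≤ s) :
    |truncPow k u - ρ u| ≤ (1 + 2 ^ k * C) * s ^ k := by
  have hC : 0 ≤ C := by simpa using (abs_nonneg _).trans (hgrowth 0)
  have hmax : |max u 0| ≤ s := by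
    rw [abs_of_nonneg (le_max_right _ _)]
    exact max_le ((le_abs_self u).trans hu) (by linarith)
  calc |truncPow k u - ρ u| ≤ |truncPow k u| + |ρ u| := abs_sub _ _
    _ ≤ s ^ k + C * (s + s) ^ k := by
        gcongr
        · rw [truncPow, abs_pow]
          exact pow_le_pow_left₀ (abs_nonneg _) hmax k
        · exact (hgrowth u).trans (by gcongr)
    _ = (1 + 2 ^ k * C) * s ^ k := by ring

theorem abs_truncPow_sub_scaled_le (hk : k ≠ 0) (ha : 0 < a)
    (hgrowth : ∀ x : ℝ, |ρ x| ≤ C * (1 + |x|) ^ k)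
    (hneg : ∀ x : ℝ, x < 0 → |ρ x / x ^ k| ≤ C * |x| ^ (-a))
    (hpos : ∀ x : ℝ, 0 < x → |ρ x / x ^ k - 1| ≤ C * x ^ (-a))
    {α δ R t : ℝ} (hα : 0 < α) (hδ : 0 < δ) (hαδ : 1 ≤ α * δ) (ht : |t| ≤ R) :
    |truncPow k t - ρ (α * t) / α ^ k| ≤ (1 + 2 ^ k * C) * δ ^ k + C * (α * δ) ^ (-a) * R ^ k := by
  have hC : 0 ≤ C := by simpa using (abs_nonneg _).trans (hgrowth 0)
  have hR : 0 ≤ R := (abs_nonneg t).trans ht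
  have hαt : |α * t| = α * |t| := by rw [abs_mul, abs_of_pos hα]
  have hscale : truncPow k t - ρ (α * t) / α ^ k = (truncPow k (α * t) - ρ (α * t)) / α ^ k := by
    rw [truncPow_mul hα.le]
    field_simp
  rw [hscale, abs_div, abs_of_pos (by positivity : 0 < α ^ k), div_le_iff₀ (by positivity),
    add_mul]
  rcases le_or_gt |t| δ with hsmall | hlarge
  · calc _ ≤ (1 + 2 ^ k * C) * (α * δ) ^ k :=
          abs_truncPow_sub_le_of_abs_le hgrowth hαδ (by rw [hαt]; gcongr)
      _ = (1 + 2 ^ k * C) * δ ^ k * α ^ k := by ring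
      _ ≤ _ := le_add_of_nonneg_right (by positivity)
  · have hne : α * t ≠ 0 := mul_ne_zero hα.ne' (abs_pos.mp (hδ.trans hlarge))
    have hrpow : (α * |t|) ^ (-a) ≤ (α * δ) ^ (-a) :=
      Real.rpow_le_rpow_of_nonpos (mul_pos hα hδ) (by gcongr) (by linarith)
    calc _ ≤ C * |α * t| ^ (-a) * |α * t| ^ k := abs_truncPow_sub_le_of_ne_zero hk hneg hpos hne
      _ ≤ C * (α * δ) ^ (-a) * (α * R) ^ k := by
          rw [hαt]
          gcongr
      _ = C * (α * δ) ^ (-a) * R ^ k * α ^ k := by ring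
      _ ≤ _ := le_add_of_nonneg_left (by positivity)

theorem pow_natCeil_div_rpow_le {η : ℝ} (hη0 : 0 < η) (hη1 : η ≤ 1) (ha : 0 < a) (k : ℕ) :
    (η ^ ⌈k / a⌉₊) ^ a ≤ η ^ k := by
  rw [← Real.rpow_natCast η ⌈k / a⌉₊, ← Real.rpow_natCast η k, ← Real.rpow_mul hη0.le]
  exact Real.rpow_le_rpow_of_exponent_ge hη0 hη1 ((div_le_iff₀ ha).mp (Nat.le_ceil _))

theorem exists_abs_truncPow_sub_scaled_le (hk : k ≠ 0) (ha : 0 < a)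
    (hgrowth : ∀ x : ℝ, |ρ x| ≤ C * (1 + |x|) ^ k)
    (hneg : ∀ x : ℝ, x < 0 → |ρ x / x ^ k| ≤ C * |x| ^ (-a))
    (hpos : ∀ x : ℝ, 0 < x → |ρ x / x ^ k - 1| ≤ C * x ^ (-a)) {R : ℝ} (hR : 0 ≤ R) :
    ∃ B : ℝ, 1 ≤ B ∧ ∀ η : ℝ, 0 < η → η ≤ 1 → ∀ α : ℝ, B * (η ^ (⌈k / a⌉₊ + 1))⁻¹ ≤ α →
      ∀ t : ℝ, |t| ≤ R → |truncPow k t - ρ (α * t) / α ^ k| ≤ η ^ k := by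
  have hC : 0 ≤ C := by simpa using (abs_nonneg _).trans (hgrowth 0)
  -- With `δ = η / c` the error for `|t| ≤ δ` is at most `η ^ k / 2`; `Q ^ a⁻¹` is chosen so that
  -- `(α δ) ^ a ≥ Q / η ^ k`, which makes the error for `|t| > δ` at most `η ^ k / 2` as well.
  set c : ℝ := 2 * (1 + 2 ^ k * C) with hc
  set Q : ℝ := 1 + 2 * C * R ^ k with hQ
  have hc1 : 1 ≤ c := by nlinarith [show 0 ≤ 2 ^ k * C by positivity]
  have hQ1 : 1 ≤ Q := le_add_of_nonneg_right (by positivity)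
  have hT : 1 ≤ Q ^ a⁻¹ := Real.one_le_rpow hQ1 (by positivity)
  refine ⟨c * Q ^ a⁻¹, one_le_mul_of_one_le_of_one_le hc1 hT, fun η hη hη1 α hα t ht => ?_⟩
  set m := ⌈k / a⌉₊
  set δ := η / c with hδ
  have hηm : 0 < η ^ m := by positivity
  have hα0 : 0 < α := (by positivity : 0 < c * Q ^ a⁻¹ * (η ^ (m + 1))⁻¹).trans_le hα
  have hαδ : Q ^ a⁻¹ * (η ^ m)⁻¹ ≤ α * δ := by
    calc Q ^ a⁻¹ * (η ^ m)⁻¹ = c * Q ^ a⁻¹ * (η ^ (m + 1))⁻¹ * (η / c) := by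
          field_simp
          ring
      _ ≤ α * δ := by gcongr
  have hαδ1 : 1 ≤ α * δ :=
    (one_le_mul_of_one_le_of_one_le hT ((one_le_inv₀ hηm).mpr (pow_le_one₀ hη.le hη1))).trans hαδ
  have hrate : Q * (η ^ k)⁻¹ ≤ (α * δ) ^ a := by
    calc Q * (η ^ k)⁻¹ ≤ Q * ((η ^ m) ^ a)⁻¹ := by
          gcongr
          exact pow_natCeil_div_rpow_le hη hη1 ha k
      _ = (Q ^ a⁻¹ * (η ^ m)⁻¹) ^ a := by
          rw [Real.mul_rpow (by positivity) (by positivity), Real.inv_rpow hηm.le,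
            Real.rpow_inv_rpow (by positivity) ha.ne']
      _ ≤ (α * δ) ^ a := Real.rpow_le_rpow (by positivity) hαδ ha.le
  have hsmall : (1 + 2 ^ k * C) * δ ^ k ≤ η ^ k / 2 := by
    calc (1 + 2 ^ k * C) * δ ^ k = (1 + 2 ^ k * C) * η ^ k / c ^ k := by rw [hδ, div_pow]; ring
      _ ≤ (1 + 2 ^ k * C) * η ^ k / c := by gcongr; exact le_self_pow₀ hc1 hk
      _ = η ^ k / 2 := by rw [hc]; field_simp
  have hlarge : C * (α * δ) ^ (-a) * R ^ k ≤ η ^ k / 2 := by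
    rw [Real.rpow_neg (by positivity)]
    calc C * ((α * δ) ^ a)⁻¹ * R ^ k ≤ C * (Q * (η ^ k)⁻¹)⁻¹ * R ^ k := by gcongr
      _ = 2 * C * R ^ k / Q * (η ^ k / 2) := by field_simp
      _ ≤ 1 * (η ^ k / 2) := by
          gcongr
          rw [div_le_one (by positivity)]
          linarith
      _ = η ^ k / 2 := one_mul _
  calc _ ≤ (1 + 2 ^ k * C) * δ ^ k + C * (α * δ) ^ (-a) * R ^ k :=
        abs_truncPow_sub_scaled_le hk ha hgrowth hneg hpos hα0 (by positivity) hαδ1 ht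
    _ ≤ η ^ k := by linarith

end Activation

namespace NeuralNet

variable {d L : ℕ}

theorem weightsBdd_mono {Φ : NeuralNet d L} {B B' : ℝ} (hΦ : Φ.weightsBdd B) (hB : B ≤ B') :
    Φ.weightsBdd B' := fun ℓ hℓ =>
  ⟨fun i j => ((hΦ ℓ hℓ).1 i j).trans hB, fun i => ((hΦ ℓ hℓ).2 i).trans hB⟩

def shallow {N : ℕ} (u θ v : Fin N → ℝ) (c : ℝ) : NeuralNet 1 2 where
  width ℓ := if ℓ = 1 then N else 1
  width_zero := rfl
  width_last := rfl
  A ℓ := match ℓ with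
    | 0 => fun i _ => u i
    | 1 => fun _ j => v j
    | _ + 2 => 0
  b ℓ := match ℓ with
    | 0 => θ
    | 1 => fun _ => c
    | _ + 2 => 0

variable {N : ℕ} (u θ v : Fin N → ℝ) (c : ℝ)

theorem shallow_realize (ρ : ℝ → ℝ) (x : ℝ) :
    (shallow u θ v c).realize ρ (fun _ => x) = ∑ j, v j * ρ (u j * x + θ j) + c := by
  show ∑ _i : Fin 1, (∑ j : Fin N, v j * ρ (∑ _j' : Fin 1, u j * x + θ j) + c) = _
  simp only [Fin.sum_univ_one]

theorem shallow_conn : (shallow u θ v c).conn ≤ 3 * N + 1 := by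
  unfold conn
  simp only [Finset.sum_range_succ, Finset.sum_range_zero, zero_add]
  refine (add_le_add (add_le_add (Finset.card_filter_le _ _) (Finset.card_filter_le _ _))
    (add_le_add (Finset.card_filter_le _ _) (Finset.card_filter_le _ _))).trans ?_
  simp only [Finset.card_univ, Fintype.card_prod, Fintype.card_fin]
  show N * 1 + N + (1 * N + 1) ≤ 3 * N + 1
  omega

theorem shallow_weightsBdd {B : ℝ} (hu : ∀ j, |u j| ≤ B) (hθ : ∀ j, |θ j| ≤ B)
    (hv : ∀ j, |v j| ≤ B) (hc : |c| ≤ B) : (shallow u θ v c).weightsBdd B := by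
  intro ℓ hℓ
  interval_cases ℓ
  · exact ⟨fun i _ => hu i, hθ⟩
  · exact ⟨fun _ j => hv j, fun _ => hc⟩

end NeuralNet

noncomputable def reluNet (n : ℕ) (α h : ℝ) : NeuralNet 1 2 :=
  NeuralNet.shallow (N := n + 1) (fun _ => α) (fun j => α * (j * h))
    (fun j => (-1) ^ (n - j) * n.choose j / ((n + 1)! * h ^ n * α ^ (n + 1)))
    (-(Δ_[h])^[n] (truncPow (n + 1)) 0 / ((n + 1)! * h ^ n))

section ReluNet

variable {n : ℕ} {α h : ℝ}

theorem reluNet_realize (ρ : ℝ → ℝ) (x : ℝ) :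
    (reluNet n α h).realize ρ (fun _ => x) =
      reluApprox n h (fun t => ρ (α * t) / α ^ (n + 1)) x := by
  rw [reluNet, NeuralNet.shallow_realize, reluApprox, sub_div, sub_eq_add_neg, neg_div]
  congr 1
  rw [fwdDiff_iter_eq_sum_shift, sum_div, ← Fin.sum_univ_eq_sum_range]
  refine sum_congr rfl fun j _ => ?_
  simp only [zsmul_eq_mul, nsmul_eq_mul, mul_add]
  push_cast
  ring

theorem reluNet_conn : (reluNet n α h).conn ≤ 3 * (n + 2) :=
  (NeuralNet.shallow_conn _ _ _ _).trans (by omega)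

theorem reluNet_weightsBdd (hα : 1 ≤ α) (hh : 0 < h) (hh1 : h ≤ 1) :
    (reluNet n α h).weightsBdd ((n + 1) * α + (2 / h) ^ n + (2 * n) ^ (n + 1)) := by
  have hα0 : 0 < α := one_pos.trans_le hα
  have hfac := Nat.one_le_cast (α := ℝ) |>.mpr (Nat.factorial_pos (n + 1))
  have hinner : (n + 1) * α ≤ (n + 1) * α + (2 / h) ^ n + (2 * n) ^ (n + 1) :=
    le_add_of_le_of_nonneg (le_add_of_nonneg_right (by positivity)) (by positivity)
  apply NeuralNet.shallow_weightsBdd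
  · intro _
    rw [abs_of_pos hα0]
    exact (le_mul_of_one_le_left hα0.le (le_add_of_nonneg_left n.cast_nonneg)).trans hinner
  · intro j
    rw [abs_of_nonneg (by positivity)]
    refine le_trans ?_ hinner
    have hj : (j : ℝ) ≤ n + 1 := by exact_mod_cast j.isLt.le
    calc α * (j * h) ≤ α * ((n + 1) * 1) := by gcongr
      _ = (n + 1) * α := by ring
  · intro j
    rw [abs_div, abs_mul, abs_pow, abs_neg, abs_one, one_pow, one_mul, Nat.abs_cast,
      abs_of_pos (by positivity)]
    refine le_trans ?_ (le_add_of_le_of_nonneg (le_add_of_nonneg_left (by positivity))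
      (by positivity))
    calc (n.choose j : ℝ) / ((n + 1)! * h ^ n * α ^ (n + 1)) ≤ 2 ^ n / (1 * h ^ n * 1) := by
          gcongr
          · exact_mod_cast Nat.choose_le_two_pow n j
          · exact one_le_pow₀ hα
      _ = (2 / h) ^ n := by rw [div_pow]; ring
  · rw [neg_div, abs_neg, abs_div, abs_of_pos (by positivity : (0 : ℝ) < (n + 1)! * h ^ n),
      div_le_iff₀ (by positivity)]
    refine le_trans ?_ (mul_le_mul_of_nonneg_right (le_add_of_nonneg_left (by positivity))
      (by positivity))
    calc _ ≤ 2 ^ n * (n * h) ^ (n + 1) := abs_fwdDiff_iter_truncPow_le_of_nonpos hh.le le_rfl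
      _ ≤ 2 * (2 ^ n * (n * h) ^ (n + 1)) := le_mul_of_one_le_left (by positivity) one_le_two
      _ = (2 * n) ^ (n + 1) * (h * h ^ n) := by ring
      _ ≤ (2 * n) ^ (n + 1) * ((n + 1)! * h ^ n) := by
          gcongr
          exact hh1.trans hfac

theorem abs_sub_reluNet_le {ρ : ℝ → ℝ} {D E x : ℝ} (hh : 0 < h) (hh1 : h ≤ 1)
    (hE : ∀ t : ℝ, |t| ≤ D + n → |truncPow (n + 1) t - ρ (α * t) / α ^ (n + 1)| ≤ E)
    (hx : |x| ≤ D) :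
    |max x 0 - (reluNet n α h).realize ρ (fun _ => x)| ≤
      (2 * n) ^ (n + 1) * h + (2 / h) ^ n * E := by
  rw [reluNet_realize]
  refine (abs_sub_le _ (reluApprox n h (truncPow (n + 1)) x) _).trans (add_le_add
    (abs_sub_reluApprox_truncPow_le hh x) (abs_reluApprox_sub_le hh fun j hj => hE _ ?_))
  have hjh : (j : ℝ) * h ≤ n * 1 := by gcongr
  calc |x + j * h| ≤ |x| + |j * h| := abs_add_le _ _
    _ ≤ D + n := by
        rw [abs_of_nonneg (by positivity : (0 : ℝ) ≤ j * h)]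
        linarith

end ReluNet

theorem exists_reluNet_of_rate {ρ : ℝ → ℝ} {n m : ℕ} {B D : ℝ} (hB : 1 ≤ B)
    (hrate : ∀ η : ℝ, 0 < η → η ≤ 1 → ∀ α : ℝ, B * (η ^ (m + 1))⁻¹ ≤ α →
      ∀ t : ℝ, |t| ≤ D + n → |truncPow (n + 1) t - ρ (α * t) / α ^ (n + 1)| ≤ η ^ (n + 1)) :
    ∃ A : ℝ, 0 < A ∧ ∀ ε : ℝ, 0 < ε → ε < 1 →
      ∃ Ψ : NeuralNet 1 2, Ψ.conn ≤ 3 * (n + 2) ∧ Ψ.weightsBdd (A * (ε ^ (n + 1 + m))⁻¹) ∧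
        ∀ x : ℝ, |x| ≤ D → |max x 0 - Ψ.realize ρ fun _ => x| ≤ ε := by
  set K : ℝ := (2 * n) ^ (n + 1)
  set L : ℝ := 2 * (K + 1)
  have hL : 2 ≤ L := by nlinarith [show 0 ≤ K by positivity]
  refine ⟨(n + 1) * (B * L ^ (m + 1)) + L ^ n + K, by positivity, fun ε hε hε1 => ?_⟩
  -- Step `2 η` and activation accuracy `η ^ (n + 1)` give the error `(2 K + 1) η ≤ L η = ε`.
  set ι := ε⁻¹
  set η := ε / L with hη_def
  set α := B * L ^ (m + 1) * ι ^ (n + 1 + m)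
  have hι : 1 ≤ ι := (one_le_inv₀ hε).mpr hε1.le
  have hη_inv : η⁻¹ = L * ι := by rw [hη_def, inv_div, div_eq_mul_inv]
  have hη1 : 2 * η ≤ 1 := by
    rw [mul_div_assoc', div_le_one (by positivity)]
    linarith
  have hα : B * (η ^ (m + 1))⁻¹ ≤ α := by
    rw [← inv_pow, hη_inv, mul_pow, ← mul_assoc]
    exact mul_le_mul_of_nonneg_left (pow_le_pow_right₀ hι (by omega)) (by positivity)
  have hα1 : 1 ≤ α :=
    one_le_mul_of_one_le_of_one_le (one_le_mul_of_one_le_of_one_le hB (one_le_pow₀ (by linarith)))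
      (one_le_pow₀ hι)
  refine ⟨reluNet n α (2 * η), reluNet_conn,
    NeuralNet.weightsBdd_mono (reluNet_weightsBdd hα1 (by positivity) hη1) ?_,
    fun x hx => (abs_sub_reluNet_le (by positivity) hη1
      (fun t ht => hrate η (by positivity) (by linarith) α hα t ht) hx).trans ?_⟩
  · rw [div_mul_cancel_left₀ two_ne_zero, hη_inv, mul_pow, ← inv_pow]
    calc (n + 1) * α + L ^ n * ι ^ n + K
        ≤ (n + 1) * α + L ^ n * ι ^ (n + 1 + m) + K * ι ^ (n + 1 + m) := by
          gcongr
          · omega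
          · exact le_mul_of_one_le_right (by positivity) (one_le_pow₀ hι)
      _ = ((n + 1) * (B * L ^ (m + 1)) + L ^ n + K) * ι ^ (n + 1 + m) := by ring
  · calc K * (2 * η) + (2 / (2 * η)) ^ n * η ^ (n + 1) = (2 * K + 1) * η := by
          rw [div_mul_cancel_left₀ two_ne_zero, inv_pow, pow_succ,
            inv_mul_cancel_left₀ (by positivity)]
          ring
      _ ≤ L * η := by gcongr; linarith
      _ = ε := mul_div_cancel₀ _ (by positivity)

theorem approx_relu_general
    (k : ℕ) (a b C : ℝ) (ρ : ℝ → ℝ) (hk : 1 ≤ k)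
    (ha : 0 < a)
    (hρ : StronglySigmoidal ρ k a b C) :
    ∃ n : ℕ, 0 < n ∧ ∀ D : ℝ, 0 < D → ∃ A : ℝ, 0 < A ∧ ∃ ε₀ : ℝ, 0 < ε₀ ∧
      ∀ ε : ℝ, 0 < ε → ε < ε₀ →
        ∃ Ψ : NeuralNet 1 2, Ψ.conn ≤ 3 * (k + 1) ∧
          Ψ.weightsBdd (A * (ε ^ n)⁻¹) ∧
          ∀ x : ℝ, |x| ≤ D →
            |max x 0 - Ψ.realize ρ fun _ => x| ≤ ε := by
  obtain ⟨n, rfl⟩ : ∃ n, k = n + 1 := ⟨k - 1, by omega⟩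
  obtain ⟨⟨-, -, -, hgrowth⟩, -, hneg, hpos, -⟩ := hρ
  refine ⟨n + 1 + ⌈((n + 1 : ℕ) : ℝ) / a⌉₊, by omega, fun D hD => ?_⟩
  obtain ⟨B, hB, hrate⟩ := exists_abs_truncPow_sub_scaled_le n.add_one_ne_zero ha hgrowth hneg hpos
    (R := D + n) (by positivity)
  obtain ⟨A, hA, hΨ⟩ := exists_reluNet_of_rate hB hrate
  exact ⟨A, hA, 1, one_pos, hΨ⟩

/-- Approximation of `x_+` on `[-D,D]` by a two-layer network with
connectivity at most `3(k+1)`, with weights bounded by `A·ε^{-n}` for sufficiently small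
`ε`, where the positive integer `n` depends only on `k` and `a`. -/
theorem approx_relu
    (k : ℕ) (a b C : ℝ) (ρ : ℝ → ℝ) (hk : 1 ≤ k)
    (ha : 0 < a) (hb : 0 < b) (hC : 0 < C)
    (hρ : StronglySigmoidal ρ k a b C) :
    ∃ n : ℕ, 0 < n ∧ ∀ D : ℝ, 0 < D → ∃ A : ℝ, 0 < A ∧ ∃ ε₀ : ℝ, 0 < ε₀ ∧
      ∀ ε : ℝ, 0 < ε → ε < ε₀ →
        ∃ Ψ : NeuralNet 1 2, Ψ.conn ≤ 3 * (k + 1) ∧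
          Ψ.weightsBdd (A * (ε ^ n)⁻¹) ∧
          ∀ x : ℝ, |x| ≤ D →
            |max x 0 - Ψ.realize ρ fun _ => x| ≤ ε :=
  approx_relu_general k a b C ρ hk ha hρ
end
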